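/- In the braid group B_5, the word σ1 σ2 σ2 σ3 σ1 σ3 σ4 σ1 σ2 σ3⁻¹ σ2 σ4 σ3⁻¹ σ2⁻¹ (a braid representative of the knot 12n222) equals the product of the positive bands of its band decomposition with band centers {1, 2, 5, 7, 8, 9, 11, 12}; in particular, this braid is quasipositive. -/

import Mathlib

/-! The conjugators of the band decomposition telescope: if `c` is the word formed by the letters
at non-center positions, then the product of the bands, taken in increasing order of their
centers, is `w c⁻¹` already in the free group. For the word of `12n222` the letters off the
centers spell `σ₂ σ₃ σ₃ σ₃⁻¹ σ₃⁻¹ σ₂⁻¹`, which cancels freely, and every center carries a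
positive generator. -/

/-- The Artin relations for the braid group with `m` generators
`σ_1, …, σ_m` (indexed by `Fin m`), i.e. the braid group `B_{m+1}`:
`σ_i σ_j = σ_j σ_i` for `|i - j| ≥ 2`, and
`σ_i σ_{i+1} σ_i = σ_{i+1} σ_i σ_{i+1}`. -/
def braidRels (m : ℕ) : Set (FreeGroup (Fin m)) :=
  { r | (∃ i j : Fin m, (i : ℕ) + 2 ≤ (j : ℕ) ∧
          r = FreeGroup.of i * FreeGroup.of j * (FreeGroup.of i)⁻¹ * (FreeGroup.of j)⁻¹) ∨
        (∃ i j : Fin m, (i : ℕ) + 1 = (j : ℕ) ∧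
          r = FreeGroup.of i * FreeGroup.of j * FreeGroup.of i *
              (FreeGroup.of j)⁻¹ * (FreeGroup.of i)⁻¹ * (FreeGroup.of j)⁻¹) }

/-- The braid group `B_{m+1}`, presented with `m` Artin generators.
Here index `i : Fin m` corresponds to the Artin generator `σ_{i+1}`. -/
abbrev BraidGrp (m : ℕ) := PresentedGroup (braidRels m)

/-- The Artin generator `σ_{i+1}` of the braid group `B_{m+1}`. -/
def σ {m : ℕ} (i : Fin m) : BraidGrp m := PresentedGroup.of i

/-- A letter of a braid word: a generator index together with a sign
(`true` = the positive generator, `false` = its inverse). -/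
abbrev Letter (m : ℕ) := Fin m × Bool

/-- The group element represented by a letter. -/
def letterEl {m : ℕ} (x : Letter m) : BraidGrp m :=
  if x.2 then σ x.1 else (σ x.1)⁻¹

/-- The group element represented by a braid word. -/
def wordProd {m : ℕ} (w : List (Letter m)) : BraidGrp m :=
  (w.map letterEl).prod

/-- The band of the band decomposition of the word `w` with band centers `S`
(1-based positions) at center `p`: namely `α_p * x_p * α_p⁻¹`, where `x_p` is
the letter of `w` at position `p` and `α_p` is the product, in increasing
order of position, of the letters of `w` at positions `q < p` with `q ∉ S`. -/
def band {m : ℕ} (w : List (Letter m)) (S : List ℕ) (p : ℕ) : BraidGrp m :=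
  let α : BraidGrp m :=
    wordProd (((w.zipIdx.map Prod.swap).filter
    fun qx => decide (qx.1 + 1 < p ∧ qx.1 + 1 ∉ S)).map Prod.snd)
  match w[p - 1]? with
  | some x => α * letterEl x * α⁻¹
  | none => 1

/-- The product, in increasing order of band center, of the bands of the
band decomposition of the word `w` with band centers `S`. -/
def bandProd {m : ℕ} (w : List (Letter m)) (S : List ℕ) : BraidGrp m :=
  (S.map (band w S)).prod

/-- A positive band in the braid group: a conjugate `α σ_j α⁻¹` of a generator. -/
def IsPositiveBand {m : ℕ} (x : BraidGrp m) : Prop :=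
  ∃ (α : BraidGrp m) (j : Fin m), x = α * σ j * α⁻¹

/-- A braid is quasipositive if it is a product of positive bands. -/
def IsQuasipositive {m : ℕ} (x : BraidGrp m) : Prop :=
  ∃ l : List (BraidGrp m), (∀ b ∈ l, IsPositiveBand b) ∧ x = l.prod

/-- A negative band in the braid group: a conjugate `α σ_j⁻¹ α⁻¹` of the
inverse of a generator. -/
def IsNegativeBand {m : ℕ} (x : BraidGrp m) : Prop :=
  ∃ (α : BraidGrp m) (j : Fin m), x = α * (σ j)⁻¹ * α⁻¹

/-- A braid is quasinegative if it is a product of negative bands. -/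
def IsQuasinegative {m : ℕ} (x : BraidGrp m) : Prop :=
  ∃ l : List (BraidGrp m), (∀ b ∈ l, IsNegativeBand b) ∧ x = l.prod

/-- The braid word for the knot `12n222` (letter `(i, true)` is `σ_(i+1)`,
`(i, false)` is `σ_(i+1)⁻¹`). -/
def theWord : List (Letter 4) :=
  [(0, true), (1, true), (1, true), (2, true), (0, true), (2, true), (3, true), (0, true), (1, true), (2, false), (1, true), (3, true), (2, false), (1, false)]

/-- The band centers. -/
def theCenters : List ℕ := [1, 2, 5, 7, 8, 9, 11, 12]

section BandDecomposition

variable {m : ℕ}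

-- the conjugator `α_p` of `band`
def bandConj (w : List (Letter m)) (S : List ℕ) (p : ℕ) : BraidGrp m :=
  wordProd (((w.zipIdx.map Prod.swap).filter
    fun qx => decide (qx.1 + 1 < p ∧ qx.1 + 1 ∉ S)).map Prod.snd)

def complementWord (w : List (Letter m)) (S : List ℕ) : List (Letter m) :=
  ((w.zipIdx.map Prod.swap).filter fun qx => decide (qx.1 + 1 ∉ S)).map Prod.snd

lemma wordProd_append (u v : List (Letter m)) : wordProd (u ++ v) = wordProd u * wordProd v := by
  simp [wordProd]

lemma band_eq_of_getElem? {w : List (Letter m)} {S : List ℕ} {p : ℕ} {x : Letter m}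
    (h : w[p - 1]? = some x) :
    band w S p = bandConj w S p * letterEl x * (bandConj w S p)⁻¹ := by
  simp only [band, h, bandConj]

lemma bandConj_append_singleton (w : List (Letter m)) (S : List ℕ) (p : ℕ) (x : Letter m) :
    bandConj (w ++ [x]) S p =
      bandConj w S p * if w.length + 1 < p ∧ w.length + 1 ∉ S then letterEl x else 1 := by
  unfold bandConj
  split_ifs with h <;> simp [List.zipIdx_append, List.filter_append, h, wordProd]

lemma bandConj_of_length_lt {w : List (Letter m)} (S : List ℕ) {p : ℕ} (hp : w.length < p) :
    bandConj w S p = wordProd (complementWord w S) := by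
  unfold bandConj complementWord
  congr 2
  refine List.filter_congr fun qx hqx => ?_
  obtain ⟨xq, hxq, rfl⟩ := List.mem_map.1 hqx
  have : xq.2 + 1 < p := by have := (List.mem_zipIdx hxq).2.1; omega
  simp [this]

lemma complementWord_append_singleton (w : List (Letter m)) (S : List ℕ) (x : Letter m) :
    complementWord (w ++ [x]) S =
      complementWord w S ++ if w.length + 1 ∈ S then [] else [x] := by
  unfold complementWord
  split_ifs with h <;> simp [List.zipIdx_append, List.filter_append, h]

lemma band_append_singleton {w : List (Letter m)} (S : List ℕ) {p : ℕ} (x : Letter m)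
    (hp₁ : 1 ≤ p) (hp : p ≤ w.length) : band (w ++ [x]) S p = band w S p := by
  obtain ⟨y, hy⟩ : ∃ y, w[p - 1]? = some y := ⟨w[p - 1], List.getElem?_eq_getElem (by omega)⟩
  have hy' : (w ++ [x])[p - 1]? = some y := by rw [List.getElem?_append_left (by omega), hy]
  rw [band_eq_of_getElem? hy, band_eq_of_getElem? hy', bandConj_append_singleton,
    if_neg (by omega), mul_one]

lemma band_append_singleton_length (w : List (Letter m)) (S : List ℕ) (x : Letter m) :
    band (w ++ [x]) S (w.length + 1) =
      wordProd (complementWord w S) * letterEl x * (wordProd (complementWord w S))⁻¹ := by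
  rw [band_eq_of_getElem? (x := x) (by simp), bandConj_append_singleton, if_neg (by omega),
    mul_one, bandConj_of_length_lt S (by omega)]

lemma prod_band_filter_range'_mul_wordProd_complementWord (w : List (Letter m)) (S : List ℕ) :
    (((List.range' 1 w.length).filter (· ∈ S)).map (band w S)).prod *
      wordProd (complementWord w S) = wordProd w := by
  induction w using List.reverseRecOn with
  | nil => simp [complementWord, wordProd]
  | append_singleton w x ih =>
    have hbands : ((List.range' 1 w.length).filter (· ∈ S)).map (band (w ++ [x]) S) =
        ((List.range' 1 w.length).filter (· ∈ S)).map (band w S) := by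
      refine List.map_congr_left fun p hp => ?_
      have := List.mem_range'_1.1 (List.mem_filter.1 hp).1
      exact band_append_singleton S x (by omega) (by omega)
    rw [List.length_append, List.length_singleton, List.range'_1_concat, List.filter_append,
      List.map_append, hbands, complementWord_append_singleton, wordProd_append, wordProd_append,
      ← ih, Nat.add_comm 1]
    by_cases hS : w.length + 1 ∈ S
    · simp [hS, band_append_singleton_length, wordProd, mul_assoc]
    · simp [hS, wordProd, mul_assoc]

theorem bandProd_mul_wordProd_complementWord {w : List (Letter m)} {S : List ℕ}
    (hS : S.SortedLT) (hSw : ∀ p ∈ S, 1 ≤ p ∧ p ≤ w.length) :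
    bandProd w S * wordProd (complementWord w S) = wordProd w := by
  have hrange : (List.range' 1 w.length).filter (· ∈ S) = S := by
    have hsorted := (List.sortedLT_range' 1 w.length one_ne_zero).pairwise
    refine (hsorted.sublist List.filter_sublist).sortedLT.eq_of_mem_iff hS fun p => ?_
    simp only [List.mem_filter, List.mem_range'_1, decide_eq_true_eq]
    exact ⟨And.right, fun hp => ⟨by have := hSw p hp; omega, hp⟩⟩
  simpa only [hrange, bandProd] using prod_band_filter_range'_mul_wordProd_complementWord w S

lemma band_isPositiveBand {w : List (Letter m)} (S : List ℕ) {p : ℕ} {j : Fin m}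
    (h : w[p - 1]? = some (j, true)) : IsPositiveBand (band w S p) :=
  ⟨bandConj w S p, j, band_eq_of_getElem? h⟩

theorem isQuasipositive_bandProd {w : List (Letter m)} {S : List ℕ}
    (hS : ∀ p ∈ S, ∃ j, w[p - 1]? = some (j, true)) : IsQuasipositive (bandProd w S) := by
  refine ⟨S.map (band w S), fun b hb => ?_, rfl⟩
  obtain ⟨p, hp, rfl⟩ := List.mem_map.1 hb
  obtain ⟨j, hj⟩ := hS p hp
  exact band_isPositiveBand S hj

end BandDecomposition

/-- The braid representative of `12n222` equals the product of the bands of its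
band decomposition with the given band centers; in particular it is quasipositive. -/
theorem knot_12n222_quasipositive :
    wordProd theWord = bandProd theWord theCenters ∧
      IsQuasipositive (wordProd theWord) := by
  have hcomplement : wordProd (complementWord theWord theCenters) = 1 := by
    simp [complementWord, theWord, theCenters, wordProd, letterEl]
  have hbands : wordProd theWord = bandProd theWord theCenters := by
    rw [← bandProd_mul_wordProd_complementWord (w := theWord) (S := theCenters)
      (List.sortedLT_iff_pairwise.2 (by decide)) (by decide), hcomplement, mul_one]
  exact ⟨hbands, hbands ▸ isQuasipositive_bandProd (by decide)⟩
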